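/- arXiv:2210.00173 — 3 statements merged into one kernel-verified Lean document; each statement's English description precedes it below -/
import Mathlib

section
/- Let Z_1, ..., Z_{n+1} be exchangeable real-valued random variables (non-conformity scores) that are almost surely distinct. Let Q_{1-α} be the ⌈(1-α)(n+1)⌉-th smallest value among Z_1, ..., Z_n. Then P(Z_{n+1} ≤ Q_{1-α}) ≥ 1-α. -/
open MeasureTheory

/-- The `k`-th smallest value (1-indexed) of a finite tuple of reals, `0` by default. -/
noncomputable def orderStat {n : ℕ} (v : Fin n → ℝ) (k : ℕ) : ℝ :=
  ((Finset.univ.val.map v).sort (· ≤ ·)).getD (k - 1) 0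

/-- Exchangeability: the joint law is invariant under permutations of the indices. -/
def Exchangeable {Ω : Type*} [MeasurableSpace Ω] (P : Measure Ω)
    {n : ℕ} {β : Type*} [MeasurableSpace β] (Z : Fin n → Ω → β) : Prop :=
  ∀ π : Equiv.Perm (Fin n),
    Measure.map (fun ω => fun i => Z (π i) ω) P = Measure.map (fun ω => fun i => Z i ω) P

open scoped ENNReal

/-! ### Auxiliary lemmas -/

lemma le_getD_of_countP_le (l : List ℝ) (hl : l.Pairwise (· ≤ ·)) (j : ℕ) (hj : j < l.length)
    (z : ℝ) (h : l.countP (fun x => decide (x < z)) ≤ j) : z ≤ l.getD j 0 := by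
  rw [List.getD_eq_getElem l 0 hj]
  by_contra hlt
  push_neg at hlt
  have htake : ∀ x ∈ l.take (j+1), (fun x => decide (x < z)) x = true := by
    intro x hx
    rw [List.mem_take_iff_getElem] at hx
    obtain ⟨i, hi, rfl⟩ := hx
    have hi' : i < l.length := lt_of_lt_of_le hi (min_le_right _ _)
    have hi1 : i < j + 1 := lt_of_lt_of_le hi (min_le_left _ _)
    simp only [decide_eq_true_eq]
    rcases lt_or_eq_of_le (Nat.lt_succ_iff.mp hi1) with hij | hij
    · exact lt_of_le_of_lt (hl.rel_get_of_lt (a := ⟨i, hi'⟩) (b := ⟨j, hj⟩) hij) hlt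
    · subst hij; exact hlt
  have h1 : (l.take (j+1)).countP (fun x => decide (x < z)) = (l.take (j+1)).length :=
    List.countP_eq_length.mpr htake
  have h2 : (l.take (j+1)).length = j+1 := by
    simp [List.length_take]; omega
  have h3 : l.countP (fun x => decide (x < z)) = (l.take (j+1)).countP (fun x => decide (x < z)) + (l.drop (j+1)).countP (fun x => decide (x < z)) := by
    rw [← List.countP_append, List.take_append_drop]
  omega

/-- The rank of index `j`: the number of indices `i` with `v i ≤ v j`. -/
noncomputable def rnk {m : ℕ} (v : Fin m → ℝ) (j : Fin m) : ℕ :=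
  (Finset.univ.filter (fun i => v i ≤ v j)).card

lemma rnk_lt_rnk {m : ℕ} {v : Fin m → ℝ} {j j' : Fin m} (h : v j < v j') :
    rnk v j < rnk v j' := by
  apply Finset.card_lt_card
  constructor
  · intro i hi
    simp only [Finset.mem_filter, Finset.mem_univ, true_and] at hi ⊢
    exact le_trans hi h.le
  · intro hsub
    have := hsub (Finset.mem_filter.mpr ⟨Finset.mem_univ j', le_refl _⟩)
    simp only [Finset.mem_filter, Finset.mem_univ, true_and] at this
    exact absurd this (not_le.mpr h)

lemma rnk_injective {m : ℕ} {v : Fin m → ℝ} (hv : Function.Injective v) :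
    Function.Injective (rnk v) := by
  intro j j' h
  by_contra hne
  rcases lt_or_gt_of_ne (fun hv' => hne (hv hv')) with hlt | hlt
  · exact absurd h (Nat.ne_of_lt (rnk_lt_rnk hlt))
  · exact absurd h.symm (Nat.ne_of_lt (rnk_lt_rnk hlt))

lemma rnk_mem_Icc {m : ℕ} (v : Fin m → ℝ) (j : Fin m) : rnk v j ∈ Finset.Icc 1 m := by
  rw [Finset.mem_Icc]
  constructor
  · have : j ∈ Finset.univ.filter (fun i => v i ≤ v j) :=
      Finset.mem_filter.mpr ⟨Finset.mem_univ j, le_refl _⟩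
    exact Finset.card_pos.mpr ⟨j, this⟩
  · calc (Finset.univ.filter (fun i => v i ≤ v j)).card ≤ Finset.univ.card :=
          Finset.card_filter_le _ _
      _ = m := Finset.card_univ.trans (Fintype.card_fin m)

lemma card_rnk_le {m : ℕ} {v : Fin m → ℝ} (hv : Function.Injective v) {k : ℕ} (hk : k ≤ m) :
    (Finset.univ.filter (fun j => rnk v j ≤ k)).card = k := by
  have himg : Finset.univ.image (rnk v) = Finset.Icc 1 m := by
    apply Finset.eq_of_subset_of_card_le
    · intro a ha
      obtain ⟨j, _, rfl⟩ := Finset.mem_image.mp ha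
      exact rnk_mem_Icc v j
    · rw [Finset.card_image_of_injective _ (rnk_injective hv)]
      simp
  have := Finset.filter_image (f := rnk v) (s := Finset.univ) (p := fun a => a ≤ k)
  rw [himg] at this
  have hcard : ((Finset.Icc 1 m).filter (fun a => a ≤ k)).card = k := by
    have : (Finset.Icc 1 m).filter (fun a => a ≤ k) = Finset.Icc 1 k := by
      ext a; simp only [Finset.mem_filter, Finset.mem_Icc]; omega
    rw [this, Nat.card_Icc]; omega
  rw [this] at hcard
  rwa [Finset.card_image_of_injective _ (rnk_injective hv)] at hcard

lemma rnk_split {n : ℕ} {v : Fin (n+1) → ℝ} (hv : Function.Injective v) :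
    rnk v (Fin.last n) =
      (Finset.univ.filter (fun i : Fin n => v i.castSucc < v (Fin.last n))).card + 1 := by
  unfold rnk
  have h1 : (Finset.univ.filter (fun i : Fin (n+1) => v i ≤ v (Fin.last n))).card
      = ∑ i : Fin (n+1), if v i ≤ v (Fin.last n) then 1 else 0 := by
    rw [Finset.sum_boole]; simp
  have h2 : (Finset.univ.filter (fun i : Fin n => v i.castSucc < v (Fin.last n))).card
      = ∑ i : Fin n, if v i.castSucc < v (Fin.last n) then 1 else 0 := by
    rw [Finset.sum_boole]; simp
  rw [h1, h2, Fin.sum_univ_castSucc]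
  simp only [le_refl, if_true]
  congr 1
  apply Finset.sum_congr rfl
  intro i _
  have hne : v i.castSucc ≠ v (Fin.last n) := by
    intro h
    exact absurd (hv h) (Fin.ne_of_lt (Fin.castSucc_lt_last i))
  by_cases h : v i.castSucc < v (Fin.last n)
  · rw [if_pos h.le, if_pos h]
  · rw [if_neg (fun hle => h (lt_of_le_of_ne hle hne)), if_neg h]

lemma le_orderStat_of_rnk_le {n : ℕ} {v : Fin (n+1) → ℝ} (hv : Function.Injective v)
    {k : ℕ} (hk1 : 1 ≤ k) (hkn : k ≤ n) (hr : rnk v (Fin.last n) ≤ k) :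
    v (Fin.last n) ≤ orderStat (fun i : Fin n => v i.castSucc) k := by
  set l := ((Finset.univ.val.map (fun i : Fin n => v i.castSucc)).sort (· ≤ ·)) with hl
  have hlen : l.length = n := by
    rw [hl, Multiset.length_sort, Multiset.card_map]
    simp
  have hsorted : l.Pairwise (· ≤ ·) := Multiset.pairwise_sort _ _
  have hcount : l.countP (fun x => decide (x < v (Fin.last n)))
      = (Finset.univ.filter (fun i : Fin n => v i.castSucc < v (Fin.last n))).card := by
    rw [hl, ← Multiset.coe_countP, Multiset.sort_eq, Multiset.countP_map]
    rfl
  have hc2 : l.countP (fun x => decide (x < v (Fin.last n))) ≤ k - 1 := by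
    rw [hcount]
    have := rnk_split hv
    omega
  show v (Fin.last n) ≤ l.getD (k-1) 0
  exact le_getD_of_countP_le l hsorted (k-1) (by omega) (v (Fin.last n)) hc2

lemma rnk_eq_sum {m : ℕ} (v : Fin m → ℝ) (j : Fin m) :
    rnk v j = ∑ i : Fin m, if v i ≤ v j then 1 else 0 := by
  unfold rnk; rw [Finset.sum_boole]; simp

lemma measurable_rnk {m : ℕ} (j : Fin m) : Measurable (fun v : Fin m → ℝ => rnk v j) := by
  simp only [rnk_eq_sum]
  apply Finset.measurable_sum
  intro i _
  exact Measurable.ite (measurableSet_le (measurable_pi_apply i) (measurable_pi_apply j))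
    measurable_const measurable_const

lemma rnk_comp_perm {m : ℕ} (v : Fin m → ℝ) (π : Equiv.Perm (Fin m)) (j : Fin m) :
    rnk (fun i => v (π i)) j = rnk v (π j) := by
  unfold rnk
  have h : (Finset.univ.filter (fun i => v (π i) ≤ v (π j)))
      = (Finset.univ.filter (fun i => v i ≤ v (π j))).image π.symm := by
    ext i
    simp only [Finset.mem_filter, Finset.mem_univ, true_and, Finset.mem_image]
    constructor
    · intro h; exact ⟨π i, h, Equiv.symm_apply_apply π i⟩
    · rintro ⟨a, ha, rfl⟩; simpa using ha
  rw [h, Finset.card_image_of_injective _ π.symm.injective]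

lemma prob_rnk_eq {Ω : Type*} [MeasurableSpace Ω] (P : Measure Ω)
    (n : ℕ) (Z : Fin (n + 1) → Ω → ℝ) (hmeas : ∀ i, Measurable (Z i))
    (hexch : Exchangeable P Z) (k : ℕ) (j : Fin (n + 1)) :
    P {ω | rnk (fun i => Z i ω) j ≤ k}
      = P {ω | rnk (fun i => Z i ω) (Fin.last n) ≤ k} := by
  set π := Equiv.swap j (Fin.last n) with hπ
  have hvec : Measurable (fun ω => fun i => Z i ω) := measurable_pi_lambda _ hmeas
  have hvecπ : Measurable (fun ω => fun i => Z (π i) ω) :=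
    measurable_pi_lambda _ (fun i => hmeas (π i))
  have hS : MeasurableSet {v : Fin (n+1) → ℝ | rnk v (Fin.last n) ≤ k} :=
    (measurable_rnk (Fin.last n)) (show MeasurableSet {m : ℕ | m ≤ k} by trivial)
  have h := hexch π
  have h1 := congrArg (fun μ => μ {v : Fin (n+1) → ℝ | rnk v (Fin.last n) ≤ k}) h
  rw [Measure.map_apply hvec hS, Measure.map_apply hvecπ hS] at h1
  have h2 : (fun ω => fun i => Z (π i) ω) ⁻¹' {v : Fin (n+1) → ℝ | rnk v (Fin.last n) ≤ k}
      = {ω | rnk (fun i => Z i ω) j ≤ k} := by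
    ext ω
    simp only [Set.mem_preimage, Set.mem_setOf_eq]
    rw [rnk_comp_perm (fun i => Z i ω) π (Fin.last n), hπ, Equiv.swap_apply_right]
  rw [h2] at h1
  rw [h1]
  rfl

lemma key_count {Ω : Type*} [MeasurableSpace Ω] (P : Measure Ω) [IsProbabilityMeasure P]
    (n : ℕ) (Z : Fin (n + 1) → Ω → ℝ) (hmeas : ∀ i, Measurable (Z i))
    (hexch : Exchangeable P Z)
    (hdist : ∀ᵐ ω ∂P, Function.Injective (fun i => Z i ω))
    (k : ℕ) (hk : k ≤ n + 1) :
    ((n : ℝ≥0∞) + 1) * P {ω | rnk (fun i => Z i ω) (Fin.last n) ≤ k} = k := by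
  set B : Fin (n+1) → Set Ω := fun j => {ω | rnk (fun i => Z i ω) j ≤ k} with hB
  have hBmeas : ∀ j, MeasurableSet (B j) := fun j =>
    ((measurable_rnk j).comp (measurable_pi_lambda _ hmeas)) (show MeasurableSet {m : ℕ | m ≤ k} by trivial)
  have hsum : ∑ j : Fin (n+1), P (B j) = k := by
    have h1 : ∀ j, P (B j) = ∫⁻ ω, (B j).indicator (fun _ => (1:ℝ≥0∞)) ω ∂P := fun j =>
      (lintegral_indicator_one (hBmeas j)).symm
    calc ∑ j : Fin (n+1), P (B j) = ∑ j : Fin (n+1), ∫⁻ ω, (B j).indicator (fun _ => (1:ℝ≥0∞)) ω ∂P := by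
          simp_rw [h1]
      _ = ∫⁻ ω, ∑ j : Fin (n+1), (B j).indicator (fun _ => (1:ℝ≥0∞)) ω ∂P := by
          rw [lintegral_finset_sum]
          exact fun j _ => measurable_const.indicator (hBmeas j)
      _ = ∫⁻ _, (k : ℝ≥0∞) ∂P := by
          apply lintegral_congr_ae
          filter_upwards [hdist] with ω hω
          have hcard := card_rnk_le (v := fun i => Z i ω) hω hk
          calc ∑ j, (B j).indicator (fun _ => (1:ℝ≥0∞)) ω
              = ∑ j, if rnk (fun i => Z i ω) j ≤ k then (1:ℝ≥0∞) else 0 := by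
                apply Finset.sum_congr rfl; intro j _
                rw [Set.indicator_apply]
                congr 1
            _ = ((Finset.univ.filter (fun j => rnk (fun i => Z i ω) j ≤ k)).card : ℝ≥0∞) := by
                rw [Finset.sum_boole]
            _ = k := by rw [hcard]
      _ = k := by rw [lintegral_const, measure_univ, mul_one]
  have heq : ∀ j, P (B j) = P (B (Fin.last n)) := fun j => prob_rnk_eq P n Z hmeas hexch k j
  calc ((n : ℝ≥0∞) + 1) * P (B (Fin.last n))
      = ∑ _j : Fin (n+1), P (B (Fin.last n)) := by
        rw [Finset.sum_const, Finset.card_univ, Fintype.card_fin, nsmul_eq_mul]; push_cast; ring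
    _ = ∑ j : Fin (n+1), P (B j) := by simp_rw [heq]
    _ = k := hsum

/-- Split conformal coverage lower bound: for exchangeable, a.s. distinct scores
`Z 0, …, Z n`, letting `Q` be the `⌈(1-α)(n+1)⌉`-th smallest among the first `n`
(interpreted as `+∞` if the index exceeds `n`, in which case coverage is trivial),
we have `P(Z_{n+1} ≤ Q) ≥ 1 - α`. -/
theorem conformal_coverage_lower_bound
    {Ω : Type*} [MeasurableSpace Ω] (P : Measure Ω) [IsProbabilityMeasure P]
    (n : ℕ) (hn : 0 < n) (α : ℝ) (hα0 : 0 < α) (hα1 : α < 1)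
    (Z : Fin (n + 1) → Ω → ℝ) (hmeas : ∀ i, Measurable (Z i))
    (hexch : Exchangeable P Z)
    (hdist : ∀ᵐ ω ∂P, Function.Injective (fun i => Z i ω)) :
    P {ω | ⌈(1 - α) * (n + 1)⌉₊ ≤ n →
        Z (Fin.last n) ω ≤
          orderStat (fun i : Fin n => Z i.castSucc ω) ⌈(1 - α) * (n + 1)⌉₊}
      ≥ ENNReal.ofReal (1 - α) := by
  set k := ⌈(1 - α) * ((n : ℝ) + 1)⌉₊ with hkdef
  by_cases hk : k ≤ n
  · have hk1 : 1 ≤ k := by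
      rw [hkdef]
      rw [Nat.one_le_iff_ne_zero, ← Nat.pos_iff_ne_zero, Nat.ceil_pos]
      have : (0:ℝ) < 1 - α := by linarith
      positivity
    have hkey := key_count P n Z hmeas hexch hdist k (by omega)
    have hmono : P {ω | rnk (fun i => Z i ω) (Fin.last n) ≤ k}
        ≤ P {ω | k ≤ n →
            Z (Fin.last n) ω ≤ orderStat (fun i : Fin n => Z i.castSucc ω) k} := by
      apply measure_mono_ae
      filter_upwards [hdist] with ω hω
      intro hmem hkn
      exact le_orderStat_of_rnk_le hω hk1 hk hmem
    refine le_trans ?_ hmono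
    have hnum : ENNReal.ofReal (1 - α) * ((n : ℝ≥0∞) + 1) ≤ (k : ℝ≥0∞) := by
      have h1 : ((n : ℝ≥0∞) + 1) = ENNReal.ofReal ((n : ℝ) + 1) := by
        rw [ENNReal.ofReal_add (Nat.cast_nonneg n) zero_le_one, ENNReal.ofReal_natCast,
          ENNReal.ofReal_one]
      rw [h1, ← ENNReal.ofReal_mul (by linarith)]
      calc ENNReal.ofReal ((1 - α) * ((n:ℝ) + 1)) ≤ ENNReal.ofReal ((k : ℕ) : ℝ) :=
            ENNReal.ofReal_le_ofReal (Nat.le_ceil _)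
        _ = (k : ℝ≥0∞) := ENNReal.ofReal_natCast k
    rw [← hkey, mul_comm (ENNReal.ofReal (1 - α))] at hnum
    exact (ENNReal.mul_le_mul_iff_right (by simp) (ENNReal.add_ne_top.mpr
      ⟨ENNReal.natCast_ne_top n, ENNReal.one_ne_top⟩)).mp hnum
  · have hset : {ω | k ≤ n →
        Z (Fin.last n) ω ≤ orderStat (fun i : Fin n => Z i.castSucc ω) k} = Set.univ :=
      Set.eq_univ_of_forall (fun ω hkn => absurd hkn hk)
    rw [hset, measure_univ]
    exact ENNReal.ofReal_le_one.mpr (by linarith)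
end

section
/- Let Z_1, ..., Z_{n+1} be exchangeable real-valued random variables with no ties almost surely. Let Q_{1-α} be the ⌈(1-α)(n+1)⌉-th smallest value among Z_1, ..., Z_n (assume ⌈(1-α)(n+1)⌉ ≤ n). Then P(Z_{n+1} ≤ Q_{1-α}) ≤ 1 - α + 1/(n+1). -/
/-!
Without ties, the ranks of the `n + 1` scores are a permutation of `1, …, n + 1`, so exactly `k`
of them are at most `k`; by exchangeability every score is equally likely to have rank at most
`k`, which therefore happens with probability `k / (n + 1)`. If `Z_{n+1} ≤ Q`, fewer than `k` of
the first `n` scores lie strictly below `Z_{n+1}`, so its rank is at most `k`. Finally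
`k = ⌈(1 - α)(n + 1)⌉ < (1 - α)(n + 1) + 1`.
-/

open MeasureTheory

open Finset
open scoped ENNReal

namespace Tuple

section Rank

variable {ι α : Type*} [Fintype ι] [LinearOrder α]

def rank (v : ι → α) (i : ι) : ℕ := #{j | v j ≤ v i}

lemma rank_comp_perm (v : ι → α) (σ : Equiv.Perm ι) (i : ι) :
    rank (v ∘ σ) i = rank v (σ i) :=
  card_equiv σ fun j => by simp

lemma one_le_rank (v : ι → α) (i : ι) : 1 ≤ rank v i :=
  card_pos.mpr ⟨i, by simp⟩

lemma rank_le_card (v : ι → α) (i : ι) : rank v i ≤ Fintype.card ι :=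
  card_le_univ _

lemma rank_lt_rank {v : ι → α} {i j : ι} (h : v i < v j) : rank v i < rank v j := by
  refine card_lt_card ⟨monotone_filter_right _ fun _ _ hl => hl.trans h.le, fun hsub => ?_⟩
  have hj : v j ≤ v i := (mem_filter.mp (hsub (by simp : j ∈ filter (fun l => v l ≤ v j) univ))).2
  exact hj.not_gt h

lemma rank_injective {v : ι → α} (hv : Function.Injective v) : Function.Injective (rank v) := by
  intro i j h
  by_contra hne
  rcases lt_or_gt_of_ne (hv.ne hne) with hlt | hlt
  · exact (rank_lt_rank hlt).ne h
  · exact (rank_lt_rank hlt).ne' h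

lemma image_rank {v : ι → α} (hv : Function.Injective v) :
    univ.image (rank v) = Icc 1 (Fintype.card ι) := by
  refine eq_of_subset_of_card_le (fun r hr => ?_) ?_
  · obtain ⟨i, -, rfl⟩ := mem_image.mp hr
    exact mem_Icc.mpr ⟨one_le_rank v i, rank_le_card v i⟩
  · rw [card_image_of_injective _ (rank_injective hv), Nat.card_Icc, card_univ]
    omega

lemma card_rank_le {v : ι → α} (hv : Function.Injective v) (k : ℕ) :
    #{i | rank v i ≤ k} = min (Fintype.card ι) k := by
  rw [← card_image_of_injective _ (rank_injective hv), ← filter_image (p := (· ≤ k)), image_rank hv]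
  have : filter (· ≤ k) (Icc 1 (Fintype.card ι)) = Icc 1 (min (Fintype.card ι) k) := by
    ext r
    simp only [mem_filter, mem_Icc]
    omega
  rw [this, Nat.card_Icc]
  omega

lemma rank_last {n : ℕ} {v : Fin (n + 1) → α} (hv : Function.Injective v) :
    rank v (Fin.last n) = #{i : Fin n | v i.castSucc < v (Fin.last n)} + 1 := by
  have hlt : ∀ i : Fin n, v i.castSucc ≤ v (Fin.last n) ↔ v i.castSucc < v (Fin.last n) :=
    fun i => (hv.ne (Fin.castSucc_lt_last i).ne).le_iff_lt
  simp only [rank, card_filter, Fin.sum_univ_castSucc, hlt, le_refl, if_true]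

lemma measurable_rank [MeasurableSpace α] [TopologicalSpace α] [OpensMeasurableSpace α]
    [OrderClosedTopology α] [SecondCountableTopology α] (i : ι) :
    Measurable fun v : ι → α => rank v i := by
  simp only [rank, card_filter]
  exact Finset.measurable_sum _ fun j _ =>
    Measurable.ite (measurableSet_le (measurable_pi_apply j) (measurable_pi_apply i))
      measurable_const measurable_const

end Rank

end Tuple

lemma List.Pairwise.countP_lt_getElem_le {α : Type*} [LinearOrder α] {l : List α}
    (hl : l.Pairwise (· ≤ ·)) {j : ℕ} (hj : j < l.length) :
    l.countP (· < l[j]) ≤ j := by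
  have hdrop : (l.drop j).countP (· < l[j]) = 0 := by
    refine List.countP_eq_zero.mpr fun x hx => ?_
    obtain ⟨i, hi, rfl⟩ := List.mem_iff_getElem.mp hx
    have hji : j + i < l.length := by
      rw [List.length_drop] at hi
      omega
    have hle : l[j] ≤ l[j + i] := hl.rel_get_of_le (a := ⟨j, hj⟩) (b := ⟨j + i, hji⟩) (by simp)
    simpa using hle
  calc l.countP (· < l[j])
      = (l.take j).countP (· < l[j]) + (l.drop j).countP (· < l[j]) := by
        rw [← List.countP_append, List.take_append_drop]
    _ ≤ j := by
        rw [hdrop, add_zero]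
        exact List.countP_le_length.trans (List.length_take_le j l)

lemma card_lt_orderStat_le {n : ℕ} (w : Fin n → ℝ) {k : ℕ} (hk : k - 1 < n) :
    #{i | w i < orderStat w k} ≤ k - 1 := by
  set l := (univ.val.map w).sort (· ≤ ·)
  have hlen : k - 1 < l.length := by simpa [l] using hk
  have hQ : orderStat w k = l[k - 1] := List.getD_eq_getElem _ _ hlen
  have hcount : #{i | w i < orderStat w k} = l.countP (· < orderStat w k) := by
    rw [card_def, filter_val, ← Multiset.countP_map w _ (· < orderStat w k), ← Multiset.coe_countP,
      Multiset.sort_eq]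
  rw [hcount, hQ]
  exact (Multiset.pairwise_sort _ _).countP_lt_getElem_le hlen

lemma Tuple.rank_last_le_of_le_orderStat {n k : ℕ} {v : Fin (n + 1) → ℝ}
    (hv : Function.Injective v) (hk1 : 1 ≤ k) (hkn : k ≤ n)
    (h : v (Fin.last n) ≤ orderStat (fun i => v i.castSucc) k) :
    rank v (Fin.last n) ≤ k := by
  have hsub : filter (fun i : Fin n => v i.castSucc < v (Fin.last n)) univ ⊆
      filter (fun i => v i.castSucc < orderStat (fun i => v i.castSucc) k) univ :=
    monotone_filter_right _ fun _ _ hi => hi.trans_le h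
  have := (card_le_card hsub).trans (card_lt_orderStat_le (fun i => v i.castSucc) (by omega))
  rw [rank_last hv]
  omega

open Classical in
lemma sum_measure_eq_of_ae_card_eq {Ω ι : Type*} [MeasurableSpace Ω] {P : Measure Ω}
    [IsProbabilityMeasure P] [Fintype ι] {A : ι → Set Ω} (hA : ∀ i, MeasurableSet (A i)) {c : ℕ}
    (hc : ∀ᵐ ω ∂P, #{i | ω ∈ A i} = c) :
    ∑ i, P (A i) = c := by
  have hcount : ∀ ω, ∑ i, (A i).indicator 1 ω = (#{i | ω ∈ A i} : ℝ≥0∞) := fun ω => by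
    rw [card_filter]
    push_cast
    simp only [Set.indicator_apply, Pi.one_apply]
  calc ∑ i, P (A i)
      = ∫⁻ ω, ∑ i, (A i).indicator 1 ω ∂P := by
        rw [lintegral_finsetSum _ fun i _ => measurable_one.indicator (hA i)]
        simp only [lintegral_indicator_one (hA _)]
    _ = ∫⁻ _, (c : ℝ≥0∞) ∂P :=
        lintegral_congr_ae (hc.mono fun ω hω => (hcount ω).trans (by rw [hω]))
    _ = c := by simp

section Exchangeable

variable {Ω : Type*} [MeasurableSpace Ω] {P : Measure Ω} {n : ℕ} {β : Type*} [MeasurableSpace β]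
  {Z : Fin n → Ω → β}

lemma Exchangeable.measure_preimage_comp_perm (hZ : Exchangeable P Z)
    (hmeas : ∀ i, Measurable (Z i)) (σ : Equiv.Perm (Fin n)) {S : Set (Fin n → β)}
    (hS : MeasurableSet S) :
    P ((fun ω i => Z (σ i) ω) ⁻¹' S) = P ((fun ω i => Z i ω) ⁻¹' S) := by
  rw [← Measure.map_apply (measurable_pi_lambda _ fun i => hmeas (σ i)) hS, hZ σ,
    Measure.map_apply (measurable_pi_lambda _ hmeas) hS]

variable [LinearOrder β] [TopologicalSpace β] [OpensMeasurableSpace β] [OrderClosedTopology β]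
  [SecondCountableTopology β]

lemma Exchangeable.measure_rank_le_eq (hZ : Exchangeable P Z) (hmeas : ∀ i, Measurable (Z i))
    (i j : Fin n) (k : ℕ) :
    P {ω | Tuple.rank (fun l => Z l ω) i ≤ k} = P {ω | Tuple.rank (fun l => Z l ω) j ≤ k} := by
  have hS : MeasurableSet {v : Fin n → β | Tuple.rank v j ≤ k} :=
    Tuple.measurable_rank j measurableSet_Iic
  have hswap : ∀ ω,
      Tuple.rank (fun l => Z (Equiv.swap i j l) ω) j = Tuple.rank (fun l => Z l ω) i := fun ω =>
    (Tuple.rank_comp_perm (fun l => Z l ω) _ j).trans (by rw [Equiv.swap_apply_right])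
  simpa only [Set.preimage_ofPred_eq, hswap] using
    hZ.measure_preimage_comp_perm hmeas (Equiv.swap i j) hS

lemma Exchangeable.measure_rank_le [IsProbabilityMeasure P] (hZ : Exchangeable P Z)
    (hmeas : ∀ i, Measurable (Z i)) (hinj : ∀ᵐ ω ∂P, Function.Injective fun i => Z i ω)
    (i : Fin n) (k : ℕ) :
    P {ω | Tuple.rank (fun l => Z l ω) i ≤ k} = (min n k : ℕ) / n := by
  have hA : ∀ j : Fin n, MeasurableSet {ω | Tuple.rank (fun l => Z l ω) j ≤ k} := fun j =>
    (Tuple.measurable_rank j).comp (measurable_pi_lambda _ hmeas) measurableSet_Iic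
  have hsum := sum_measure_eq_of_ae_card_eq hA
    (hinj.mono fun ω hω => by
      simpa only [Set.mem_ofPred_eq, Fintype.card_fin] using Tuple.card_rank_le hω k)
  rw [sum_congr rfl fun j _ => hZ.measure_rank_le_eq hmeas j i k, sum_const, card_univ,
    Fintype.card_fin, nsmul_eq_mul] at hsum
  rw [ENNReal.eq_div_iff (by simpa using i.pos.ne') (ENNReal.natCast_ne_top n), hsum]

end Exchangeable

lemma natCeil_mul_div_le {a c : ℝ} (ha : 0 ≤ a) (hc : 0 < c) :
    (⌈a * c⌉₊ : ℝ) / c ≤ a + 1 / c := by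
  rw [div_le_iff₀ hc, add_mul, one_div_mul_cancel hc.ne']
  exact (Nat.ceil_lt_add_one (by positivity)).le

theorem conformal_coverage_upper_bound_general
    {Ω : Type*} [MeasurableSpace Ω] (P : Measure Ω) [IsProbabilityMeasure P]
    (n : ℕ) (α : ℝ) (hα1 : α < 1)
    (hk : ⌈(1 - α) * (n + 1)⌉₊ ≤ n)
    (Z : Fin (n + 1) → Ω → ℝ) (hmeas : ∀ i, Measurable (Z i))
    (hexch : Exchangeable P Z)
    (hdist : ∀ᵐ ω ∂P, Function.Injective (fun i => Z i ω)) :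
    P {ω | Z (Fin.last n) ω ≤
        orderStat (fun i : Fin n => Z i.castSucc ω) ⌈(1 - α) * (n + 1)⌉₊}
      ≤ ENNReal.ofReal (1 - α + 1 / (n + 1)) := by
  set k := ⌈(1 - α) * (n + 1)⌉₊
  have hk1 : 1 ≤ k := Nat.one_le_iff_ne_zero.mpr
    (Nat.ceil_pos.mpr (mul_pos (sub_pos.mpr hα1) (by positivity))).ne'
  calc P {ω | Z (Fin.last n) ω ≤ orderStat (fun i : Fin n => Z i.castSucc ω) k}
      ≤ P {ω | Tuple.rank (fun i => Z i ω) (Fin.last n) ≤ k} :=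
        measure_mono_ae <| hdist.mono fun ω hω hle =>
          Tuple.rank_last_le_of_le_orderStat hω hk1 hk hle
    _ = ENNReal.ofReal (k / (n + 1)) := by
        rw [hexch.measure_rank_le hmeas hdist, min_eq_right (by omega),
          ENNReal.ofReal_div_of_pos (by positivity), ENNReal.ofReal_natCast]
        norm_cast
    _ ≤ ENNReal.ofReal (1 - α + 1 / (n + 1)) :=
        ENNReal.ofReal_le_ofReal (natCeil_mul_div_le (by linarith) (by positivity))

/-- Split conformal coverage upper bound: for exchangeable, a.s. distinct scores,
with `Q` the `⌈(1-α)(n+1)⌉`-th smallest among the first `n` scores (assuming the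
index is at most `n`), `P(Z_{n+1} ≤ Q) ≤ 1 - α + 1/(n+1)`. -/
theorem conformal_coverage_upper_bound
    {Ω : Type*} [MeasurableSpace Ω] (P : Measure Ω) [IsProbabilityMeasure P]
    (n : ℕ) (hn : 0 < n) (α : ℝ) (hα0 : 0 < α) (hα1 : α < 1)
    (hk : ⌈(1 - α) * (n + 1)⌉₊ ≤ n)
    (Z : Fin (n + 1) → Ω → ℝ) (hmeas : ∀ i, Measurable (Z i))
    (hexch : Exchangeable P Z)
    (hdist : ∀ᵐ ω ∂P, Function.Injective (fun i => Z i ω)) :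
    P {ω | Z (Fin.last n) ω ≤
        orderStat (fun i : Fin n => Z i.castSucc ω) ⌈(1 - α) * (n + 1)⌉₊}
      ≤ ENNReal.ofReal (1 - α + 1 / (n + 1)) :=
  conformal_coverage_upper_bound_general P n α hα1 hk Z hmeas hexch hdist
end

section
/- For exchangeable, almost surely distinct random variables V_1,...,V_{n+1}, the rank R of V_{n+1} among all n+1 values is uniformly distributed on {1,...,n+1}. -/
/- If the values are a.s. distinct, the rank map is a.s. a bijection onto `{1, …, n+1}`, so for
each `r` exactly one index has rank `r`. Exchangeability (through the transposition of `j` and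
`n+1`) makes the probability that index `j` has rank `r` independent of `j`; these `n+1` equal
probabilities therefore sum to `1`. -/

open MeasureTheory
open scoped ENNReal

section Rank

variable {ι α : Type*} [LinearOrder α]

noncomputable def rank (v : ι → α) (j : ι) : ℕ :=
  Set.ncard {i | v i ≤ v j}

theorem rank_eq_sum [Fintype ι] (v : ι → α) (j : ι) :
    rank v j = ∑ i, if v i ≤ v j then 1 else 0 := by
  rw [rank, Set.ncard_eq_toFinset_card', Set.toFinset_ofPred, Finset.card_filter]

theorem rank_comp_perm (v : ι → α) (σ : Equiv.Perm ι) (j : ι) :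
    rank (v ∘ σ) j = rank v (σ j) := by
  have h : {i | (v ∘ σ) i ≤ (v ∘ σ) j} = σ.symm '' {i | v i ≤ v (σ j)} := by
    simp [Equiv.image_eq_preimage_symm]
  rw [rank, h, Set.ncard_image_of_injective _ σ.symm.injective, rank]

theorem rank_mem_Icc [Finite ι] (v : ι → α) (j : ι) :
    rank v j ∈ Finset.Icc 1 (Nat.card ι) := by
  rw [Finset.mem_Icc, ← Set.ncard_univ]
  exact ⟨(Set.ncard_pos (Set.toFinite _)).mpr ⟨j, le_rfl⟩,
    Set.ncard_le_ncard (Set.subset_univ _)⟩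

theorem rank_lt_rank [Finite ι] {v : ι → α} {j k : ι} (h : v j < v k) : rank v j < rank v k :=
  Set.ncard_lt_ncard ⟨fun _ hi => hi.trans h.le, fun hsub => (hsub (le_refl (v k))).not_gt h⟩
    (Set.toFinite _)

theorem rank_injective [Finite ι] {v : ι → α} (hv : Function.Injective v) :
    Function.Injective (rank v) := by
  intro j k h
  rcases lt_trichotomy (v j) (v k) with hjk | hjk | hjk
  · exact absurd h (rank_lt_rank hjk).ne
  · exact hv hjk
  · exact absurd h (rank_lt_rank hjk).ne'

theorem existsUnique_rank_eq [Fintype ι] {v : ι → α} (hv : Function.Injective v) {r : ℕ}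
    (hr : 1 ≤ r) (hr' : r ≤ Nat.card ι) : ∃! j, rank v j = r := by
  have himage : Finset.univ.image (rank v) = Finset.Icc 1 (Nat.card ι) :=
    Finset.eq_of_subset_of_card_le
      (Finset.image_subset_iff.mpr fun j _ => rank_mem_Icc v j)
      (by simp [Finset.card_image_of_injective _ (rank_injective hv)])
  obtain ⟨j, -, hj⟩ := Finset.mem_image.mp (himage ▸ Finset.mem_Icc.mpr ⟨hr, hr'⟩)
  exact ⟨j, hj, fun k hk => rank_injective hv (hk.trans hj.symm)⟩

end Rank

theorem Exchangeable.measure_preimage_perm {Ω β : Type*} [MeasurableSpace Ω] {P : Measure Ω}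
    {n : ℕ} [MeasurableSpace β] {Z : Fin n → Ω → β} (hZ : Exchangeable P Z)
    (hmeas : ∀ i, Measurable (Z i)) (π : Equiv.Perm (Fin n)) {A : Set (Fin n → β)}
    (hA : MeasurableSet A) :
    P {ω | (fun i => Z (π i) ω) ∈ A} = P {ω | (fun i => Z i ω) ∈ A} := by
  have h := DFunLike.congr_fun (hZ π) A
  rwa [Measure.map_apply (measurable_pi_lambda _ fun i => hmeas (π i)) hA,
    Measure.map_apply (measurable_pi_lambda _ hmeas) hA] at h

section MeasurableRank

variable {α : Type*} [LinearOrder α] [TopologicalSpace α] [OrderClosedTopology α]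
  [SecondCountableTopology α] [MeasurableSpace α] [OpensMeasurableSpace α]

theorem measurable_rank {ι : Type*} [Fintype ι] (j : ι) :
    Measurable fun v : ι → α => rank v j := by
  simp_rw [rank_eq_sum]
  exact Finset.measurable_sum _ fun i _ =>
    Measurable.ite (measurableSet_le (measurable_pi_apply i) (measurable_pi_apply j))
      measurable_const measurable_const

theorem Exchangeable.measure_rank_eq {Ω : Type*} [MeasurableSpace Ω] {P : Measure Ω}
    {n : ℕ} {V : Fin n → Ω → α} (hV : Exchangeable P V) (hmeas : ∀ i, Measurable (V i))
    (r : ℕ) (j k : Fin n) :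
    P {ω | rank (fun i => V i ω) j = r} = P {ω | rank (fun i => V i ω) k = r} := by
  have hset : {ω | rank (fun i => V i ω) j = r} =
      {ω | (fun i => V (Equiv.swap j k i) ω) ∈ {v | rank v k = r}} := by
    ext ω
    show rank (fun i => V i ω) j = r ↔ rank ((fun i => V i ω) ∘ Equiv.swap j k) k = r
    rw [rank_comp_perm, Equiv.swap_apply_right]
  rw [hset]
  exact hV.measure_preimage_perm hmeas _ (measurable_rank k (measurableSet_singleton r))

end MeasurableRank

theorem sum_measure_eq_one_of_ae_existsUnique {Ω ι : Type*} [MeasurableSpace Ω] {P : Measure Ω}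
    [IsProbabilityMeasure P] [Fintype ι] {E : ι → Set Ω} (hE : ∀ j, MeasurableSet (E j))
    (h : ∀ᵐ ω ∂P, ∃! j, ω ∈ E j) : ∑ j, P (E j) = 1 := by
  have hsum : ∀ᵐ ω ∂P, ∑ j, (E j).indicator 1 ω = (1 : ℝ≥0∞) := by
    filter_upwards [h] with ω ⟨j₀, hj₀, huniq⟩
    rw [Finset.sum_eq_single j₀ (fun j _ hj => Set.indicator_of_notMem (mt (huniq j) hj) _)
      (by simp), Set.indicator_of_mem hj₀, Pi.one_apply]
  calc ∑ j, P (E j) = ∫⁻ ω, ∑ j, (E j).indicator 1 ω ∂P := by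
        rw [lintegral_finsetSum _ fun j _ => measurable_one.indicator (hE j)]
        exact Finset.sum_congr rfl fun j _ => (lintegral_indicator_one (hE j)).symm
    _ = 1 := by rw [lintegral_congr_ae hsum, lintegral_one, measure_univ]

/-- For exchangeable, almost surely distinct random variables `V_1, …, V_{n+1}`,
the rank `R = #{i : V_i ≤ V_{n+1}}` of the last variable is uniform on
`{1, …, n+1}`. -/
theorem rank_uniform
    {Ω : Type*} [MeasurableSpace Ω] (P : Measure Ω) [IsProbabilityMeasure P]
    (n : ℕ) (V : Fin (n + 1) → Ω → ℝ) (hmeas : ∀ i, Measurable (V i))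
    (hexch : Exchangeable P V)
    (hdist : ∀ᵐ ω ∂P, Function.Injective (fun i => V i ω)) :
    ∀ r : ℕ, 1 ≤ r → r ≤ n + 1 →
      P {ω | Set.ncard {i : Fin (n + 1) | V i ω ≤ V (Fin.last n) ω} = r}
        = (↑(n + 1) : ℝ≥0∞)⁻¹ := by
  intro r hr hr'
  set E : Fin (n + 1) → Set Ω := fun j => {ω | rank (fun i => V i ω) j = r}
  have hE : ∀ j, MeasurableSet (E j) := fun j =>
    measurable_rank j (measurableSet_singleton r) |>.preimage (measurable_pi_lambda _ hmeas)
  have hsum : ∑ j, P (E j) = 1 := sum_measure_eq_one_of_ae_existsUnique hE <|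
    hdist.mono fun ω hω => existsUnique_rank_eq hω hr (by simpa using hr')
  rw [Finset.sum_congr rfl fun j _ => hexch.measure_rank_eq hmeas r j (Fin.last n),
    Finset.sum_const, Finset.card_univ, Fintype.card_fin, nsmul_eq_mul] at hsum
  exact ENNReal.eq_inv_of_mul_eq_one_left (by rwa [mul_comm] at hsum)
end
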